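/- Let (X, 𝔄, d) be a C*-algebra valued metric space over a unital C*-algebra 𝔄, and let T : X → X satisfy d(Tx, Ty) ⪯ A · (d(x,Tx) + d(y,Ty)) for all x,y ∈ X, where A is a positive element of 𝔄 commuting with every element of 𝔄 and ‖A‖ < 1/2 (so that 1 − A is invertible). Then for every x ∈ X, d(Tx, T²x) ⪯ A(1 − A)⁻¹ · d(x, Tx), where moreover B := A(1 − A)⁻¹ is a positive element commuting with every element of 𝔄 and ‖B‖ < 1. -/

import Mathlib

open Filter Topology Function

/-- A C*-algebra valued metric space: `d : X × X → A` into a unital C*-algebra `A`. -/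
structure CStarMetric (X : Type*) (A : Type*) [NormedRing A] [StarRing A] [PartialOrder A] where
  d : X → X → A
  nonneg : ∀ x y, 0 ≤ d x y
  eq_zero_iff : ∀ x y, d x y = 0 ↔ x = y
  symm : ∀ x y, d x y = d y x
  triangle : ∀ x y z, d x y ≤ d x z + d z y

variable {X A : Type*} [NormedRing A] [StarRing A] [CStarRing A] [PartialOrder A]
  [StarOrderedRing A] [CompleteSpace A] [NormedAlgebra ℂ A]

/-- A sequence converges to `x` when `‖d (s n) x‖ → 0`. -/
def CStarConverges (M : CStarMetric X A) (s : ℕ → X) (x : X) : Prop :=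
  Tendsto (fun n => ‖M.d (s n) x‖) atTop (𝓝 (0 : ℝ))

/-- Cauchy sequence: `‖d (s n) (s m)‖ → 0` as `n, m → ∞`. -/
def CStarCauchy (M : CStarMetric X A) (s : ℕ → X) : Prop :=
  ∀ ε : ℝ, 0 < ε → ∃ N : ℕ, ∀ n m : ℕ, N ≤ n → N ≤ m → ‖M.d (s n) (s m)‖ < ε

/-- Completeness: every Cauchy sequence converges. -/
def CStarComplete (M : CStarMetric X A) : Prop :=
  ∀ s : ℕ → X, CStarCauchy M s → ∃ x, CStarConverges M s x

/-- Orbital continuity of `T` at `u`. -/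
def OrbContAt (M : CStarMetric X A) (T : X → X) (u : X) : Prop :=
  ∀ (x : X) (k : ℕ → ℕ), StrictMono k →
    Tendsto (fun i => ‖M.d (T^[k i] x) u‖) atTop (𝓝 (0 : ℝ)) →
    Tendsto (fun i => ‖M.d (T^[k i + 1] x) (T u)‖) atTop (𝓝 (0 : ℝ))

/-- Orbital continuity of `T` on `X`. -/
def OrbCont (M : CStarMetric X A) (T : X → X) : Prop :=
  ∀ u, OrbContAt M T u

/-- Ćirić-type1 contractive mapping. -/
def CiricType1 (M : CStarMetric X A) (T : X → X) : Prop :=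
  ∃ q δ : X → X → A, (∀ x y, ‖q x y‖ < 1) ∧ (∀ x y, 0 ≤ δ x y) ∧
    ∀ x y : X, ∀ n : ℕ, 1 ≤ n →
      M.d (T^[n] x) (T^[n] y) ≤ star (q x y) ^ n * δ x y * q x y ^ n

/-- Ćirić-type2 contractive mapping: `q` takes values in the central positive elements. -/
def CiricType2 (M : CStarMetric X A) (T : X → X) : Prop :=
  ∃ q δ : X → X → A,
    (∀ x y, 0 ≤ q x y ∧ (∀ b : A, q x y * b = b * q x y) ∧ ‖q x y‖ < 1) ∧
    (∀ x y, 0 ≤ δ x y) ∧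
    ∀ x y : X, ∀ n : ℕ, 1 ≤ n → M.d (T^[n] x) (T^[n] y) ≤ q x y ^ n * δ x y

/-!
From the Kannan condition at `(x, T x)` one gets `(1 - a) d(Tx, T²x) ⪯ a d(x, Tx)`. As `0 ⪯ a`
and `‖a‖ < 1`, `1 - a` is a positive unit; its inverse is positive and central, and multiplying
by a central positive element preserves `⪯`. The Neumann series gives
`‖a (1 - a)⁻¹‖ ≤ ‖a‖ / (1 - ‖a‖) < 1`.

The order-theoretic facts come from the continuous functional calculus of a `CStarAlgebra`. The
hypotheses on `𝔄` provide all of its fields except `StarModule ℂ 𝔄`, which is recovered from the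
order: for `i` the image of `Complex.I`, `star i * i` is a positive square root of `1`, hence
equals `1`, so `star i = -i`.
-/

open Complex

theorem Commute.ringInverse_left {M₀ : Type*} [MonoidWithZero M₀] {a b : M₀}
    (h : Commute a b) : Commute (Ring.inverse a) b := by
  by_cases ha : IsUnit a
  · obtain ⟨u, rfl⟩ := ha
    rw [Ring.inverse_unit]
    exact h.units_inv_left
  · rw [Ring.inverse_non_unit a ha]
    exact Commute.zero_left b

theorem Commute.ringInverse_one_sub_left {R : Type*} [Ring R] {a b : R} (h : Commute a b) :
    Commute (Ring.inverse (1 - a)) b :=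
  ((Commute.one_left b).sub_left h).ringInverse_left

theorem eq_one_of_nonneg_of_mul_self_eq_one {R : Type*} [Ring R] [StarRing R] [PartialOrder R]
    [StarOrderedRing R] [IsAddTorsionFree R] {s : R} (hs : 0 ≤ s) (hss : s * s = 1) : s = 1 := by
  set f := 1 - s with hf_def
  have hf : star f = f := by rw [hf_def, star_sub, star_one, (IsSelfAdjoint.of_nonneg hs).star_eq]
  have hff : f * f = f + f := by
    simp only [hf_def, sub_mul, mul_sub, one_mul, mul_one, hss]; abel
  have hfsf : f * s * f = -(f + f) := by
    simp only [hf_def, sub_mul, mul_sub, one_mul, mul_one, hss]; abel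
  have hpos : 0 ≤ f + f := by simpa only [hf, hff] using star_mul_self_nonneg f
  have hneg : 0 ≤ -(f + f) := by simpa only [hf, hfsf] using star_left_conjugate_nonneg hs f
  have h2f : 2 • f = 2 • (0 : R) := by
    rw [two_nsmul, smul_zero]; exact le_antisymm (neg_nonneg.1 hneg) hpos
  exact (sub_eq_zero.1 (nsmul_right_injective two_ne_zero h2f)).symm

section StarOrderedComplexAlgebra

variable {R : Type*} [Ring R] [StarRing R] [PartialOrder R] [StarOrderedRing R] [Algebra ℂ R]

theorem star_algebraMap_I : star (algebraMap ℂ R I) = -algebraMap ℂ R I := by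
  let : Module ℚ R := Module.compHom R (algebraMap ℚ ℂ)
  have : IsAddTorsionFree R := .of_module_rat R
  set u := algebraMap ℂ R I
  have huu : u * u = -1 := by rw [← map_mul, I_mul_I, map_neg, map_one]
  have hs : star u * u = 1 := by
    refine eq_one_of_nonneg_of_mul_self_eq_one (star_mul_self_nonneg u) ?_
    rw [(Algebra.commute_algebraMap_left I (star u)).mul_mul_mul_comm, ← star_mul, huu,
      star_neg, star_one, neg_mul_neg, one_mul]
  calc star u = star u * u * -u := by rw [mul_assoc, mul_neg, huu, neg_neg, mul_one]
    _ = -u := by rw [hs, one_mul]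

theorem star_I_smul (x : R) : star (I • x) = -(I • star x) := by
  rw [Algebra.smul_def, star_mul, star_algebraMap_I, mul_neg,
    ← Algebra.commutes, ← Algebra.smul_def]

end StarOrderedComplexAlgebra

theorem star_real_smul {E : Type*} [AddCommGroup E] [Module ℝ E] [TopologicalSpace E]
    [ContinuousSMul ℝ E] [T2Space E] [StarAddMonoid E] [ContinuousStar E] (r : ℝ) (x : E) :
    star (r • x) = r • star x :=
  map_real_smul (starAddEquiv : E ≃+ E) continuous_star r x

theorem starModule_complex {B : Type*} [NormedRing B] [StarRing B] [CStarRing B] [PartialOrder B]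
    [StarOrderedRing B] [NormedAlgebra ℂ B] : StarModule ℂ B where
  star_smul c x := by
    conv_lhs => rw [← re_add_im c]
    rw [add_smul, mul_smul, coe_smul, coe_smul, star_add, star_real_smul, star_real_smul,
      star_I_smul]
    conv_rhs => rw [← re_add_im (star c), add_smul, mul_smul, coe_smul, coe_smul]
    rw [star_def, conj_re, conj_im, neg_smul, smul_neg]

noncomputable abbrev cstarAlgebraOfStarOrderedRing {B : Type*} [NormedRing B] [StarRing B]
    [CStarRing B] [PartialOrder B] [StarOrderedRing B] [CompleteSpace B] [NormedAlgebra ℂ B] :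
    CStarAlgebra B :=
  { ‹NormedRing B›, ‹StarRing B›, ‹CStarRing B›, ‹CompleteSpace B›, ‹NormedAlgebra ℂ B›,
    starModule_complex with }

theorem norm_mul_ringInverse_one_sub_lt_one {R : Type*} [NormedRing R] [NormOneClass R]
    [HasSummableGeomSeries R] {a : R} (ha : ‖a‖ < 1 / 2) : ‖a * Ring.inverse (1 - a)‖ < 1 := by
  have ha1 : ‖a‖ < 1 := ha.trans (by norm_num)
  have hv : ‖Ring.inverse (1 - a)‖ ≤ (1 - ‖a‖)⁻¹ := by
    simpa [geom_series_eq_inverse a ha1] using tsum_geometric_le_of_norm_lt_one a ha1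
  calc ‖a * Ring.inverse (1 - a)‖ ≤ ‖a‖ * (1 - ‖a‖)⁻¹ :=
        (norm_mul_le _ _).trans (mul_le_mul_of_nonneg_left hv (norm_nonneg a))
    _ < 1 := by rw [← div_eq_mul_inv, div_lt_one (by linarith)]; linarith

section CStarAlgebra

variable {B : Type*} [CStarAlgebra B] [PartialOrder B] [StarOrderedRing B]

theorem Commute.mul_le_mul_of_nonneg_left {p x y : B} (hp : 0 ≤ p) (hpx : Commute p x)
    (hpy : Commute p y) (h : x ≤ y) : p * x ≤ p * y := by
  rw [← sub_nonneg, ← mul_sub]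
  exact Commute.mul_nonneg hp (sub_nonneg.2 h) (hpy.sub_right hpx)

theorem ringInverse_one_sub_nonneg {a : B} (ha : 0 ≤ a) (ha1 : ‖a‖ < 1) :
    0 ≤ Ring.inverse (1 - a) :=
  (CFC.ringInverse_nonneg_iff_nonneg_of_isUnit (isUnit_one_sub_of_norm_lt_one ha1)).2
    (sub_nonneg.2 ((CStarAlgebra.norm_le_one_iff_of_nonneg a ha).1 ha1.le))

theorem le_mul_ringInverse_one_sub_mul_of_one_sub_mul_le {a s t : B} (ha : 0 ≤ a)
    (ha_comm : ∀ b, Commute a b) (ha1 : ‖a‖ < 1) (h : (1 - a) * t ≤ a * s) :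
    t ≤ a * Ring.inverse (1 - a) * s := by
  set v := Ring.inverse (1 - a)
  have hv : ∀ b, Commute v b := fun b => (ha_comm b).ringInverse_one_sub_left
  calc t = v * ((1 - a) * t) := by
        rw [← mul_assoc, Ring.inverse_mul_cancel _ (isUnit_one_sub_of_norm_lt_one ha1), one_mul]
    _ ≤ v * (a * s) :=
        (hv _).mul_le_mul_of_nonneg_left (ringInverse_one_sub_nonneg ha ha1) (hv _) h
    _ = a * v * s := by rw [← mul_assoc, (hv a).eq]

end CStarAlgebra

theorem kannan_type_step_estimate
    (M : CStarMetric X A) (T : X → X)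
    (a : A) (ha_pos : 0 ≤ a) (ha_comm : ∀ b : A, a * b = b * a) (ha_norm : ‖a‖ < 1 / 2)
    (hT : ∀ x y : X, M.d (T x) (T y) ≤ a * (M.d x (T x) + M.d y (T y))) :
    IsUnit (1 - a) ∧
    (∀ x : X, M.d (T x) (T (T x)) ≤ a * Ring.inverse (1 - a) * M.d x (T x)) ∧
    0 ≤ a * Ring.inverse (1 - a) ∧
    (∀ b : A, a * Ring.inverse (1 - a) * b = b * (a * Ring.inverse (1 - a))) ∧
    ‖a * Ring.inverse (1 - a)‖ < 1 := by
  let : CStarAlgebra A := cstarAlgebraOfStarOrderedRing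
  have ha1 : ‖a‖ < 1 := ha_norm.trans (by norm_num)
  refine ⟨isUnit_one_sub_of_norm_lt_one ha1, fun x => ?_,
    Commute.mul_nonneg ha_pos (ringInverse_one_sub_nonneg ha_pos ha1) (ha_comm _),
    fun b => (Commute.mul_left (ha_comm b) (Commute.ringInverse_one_sub_left (ha_comm b))).eq, ?_⟩
  · refine le_mul_ringInverse_one_sub_mul_of_one_sub_mul_le ha_pos ha_comm ha1 ?_
    rw [sub_mul, one_mul, sub_le_iff_le_add, ← mul_add]
    exact hT x (T x)
  · nontriviality A
    exact norm_mul_ringInverse_one_sub_lt_one ha_norm
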